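/- For α ∈ F_{q^n}, the F_q-order of α equals the F_q-order of its associated additive character χ_α if and only if the F_q-order of α is a self-reciprocal polynomial (equivalently, the F_q-order of χ_α is self-reciprocal). -/

import Mathlib

open Polynomial

noncomputable section

/-- The action `g ∘ α = Σ aᵢ α^(qⁱ)` of `F_q[x]` on an extension of `F_q`. -/
def fqAct (F : Type*) [Field F] [Fintype F] {E : Type*} [Field E] [Algebra F E]
    (g : F[X]) (α : E) : E :=
  g.sum fun i a => algebraMap F E a * α ^ (Fintype.card F) ^ i

/-- `m` is the `F_q`-order of `α`: the monic generator of the annihilator of `α`. -/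
def IsFqOrder (F : Type*) [Field F] [Fintype F] {E : Type*} [Field E] [Algebra F E]
    (α : E) (m : F[X]) : Prop :=
  m.Monic ∧ fqAct F m α = 0 ∧ ∀ g : F[X], fqAct F g α = 0 → m ∣ g

/-- `m` is the `F_q`-order of the additive character `χ`: the monic generator of the ideal
of `g` with `g ∘ χ` trivial, where `(g ∘ χ) β = χ (g ∘ β)`. -/
def IsCharFqOrder (F : Type*) [Field F] [Fintype F] {E : Type*} [Field E] [Algebra F E]
    (χ : E → ℂ) (m : F[X]) : Prop :=
  m.Monic ∧ (∀ β : E, χ (fqAct F m β) = 1) ∧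
    ∀ g : F[X], (∀ β : E, χ (fqAct F g β) = 1) → m ∣ g

/-- The monic reciprocal `f*(x) = f(0)⁻¹ x^(deg f) f(1/x)` of a polynomial. -/
def monicRecip {K : Type*} [Field K] (f : K[X]) : K[X] :=
  C (f.coeff 0)⁻¹ * f.reverse

/-- The additive character `χ_a : β ↦ exp(2πi · Tr(aβ)/p)`. -/
def stdChar (p : ℕ) [Fact p.Prime] {E : Type*} [Field E] [Algebra (ZMod p) E]
    (a : E) : E → ℂ :=
  fun β => Complex.exp (2 * Real.pi * Complex.I *
    ((Algebra.trace (ZMod p) E (a * β)).val : ℂ) / p)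

/-- `β` is normal over `F_q`: its Frobenius conjugates form an `F_q`-basis. -/
def IsNormalElem (F : Type*) [Field F] [Fintype F] {E : Type*} [Field E] [Algebra F E]
    (β : E) : Prop :=
  LinearIndependent F (fun i : Fin (Module.finrank F E) => β ^ (Fintype.card F) ^ (i : ℕ)) ∧
  Submodule.span F (Set.range fun i : Fin (Module.finrank F E) => β ^ (Fintype.card F) ^ (i : ℕ)) = ⊤

/-! ### Auxiliary lemmas about `fqAct` -/

section FqActLemmas

variable {F : Type*} [Field F] [Fintype F] {E : Type*} [Field E] [Algebra F E]

lemma algebraMap_pow_card_pow (c : F) (k : ℕ) :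
    (algebraMap F E c) ^ (Fintype.card F) ^ k = algebraMap F E c := by
  rw [← map_pow, FiniteField.pow_card_pow]

lemma pow_card_add' (x y : E) :
    (x + y) ^ Fintype.card F = x ^ Fintype.card F + y ^ Fintype.card F := by
  haveI hp : Fact (ringChar F).Prime := ⟨CharP.char_is_prime F (ringChar F)⟩
  haveI : CharP E (ringChar F) :=
    charP_of_injective_algebraMap (algebraMap F E).injective (ringChar F)
  obtain ⟨e, hpp, he⟩ := FiniteField.card F (ringChar F)
  rw [he]
  exact add_pow_char_pow x y (ringChar F) e

/-- The `q`-power Frobenius as an `F`-linear endomorphism of `E`. -/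
def frobL (F : Type*) [Field F] [Fintype F]
    (E : Type*) [Field E] [Algebra F E] : Module.End F E where
  toFun x := x ^ Fintype.card F
  map_add' x y := pow_card_add' x y
  map_smul' c x := by
    simp only [RingHom.id_apply, Algebra.smul_def, mul_pow]
    rw [← map_pow, FiniteField.pow_card]

lemma frobL_pow_apply (k : ℕ) (x : E) :
    ((frobL F E) ^ k) x = x ^ (Fintype.card F) ^ k := by
  induction k with
  | zero => simp
  | succ k ih =>
    rw [pow_succ', Module.End.mul_apply, ih, pow_succ, pow_mul]
    rfl

lemma fqAct_eq_aeval (g : F[X]) (β : E) :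
    fqAct F g β = Polynomial.aeval (frobL F E) g β := by
  rw [aeval_def, eval₂_eq_sum]
  unfold fqAct
  rw [Polynomial.sum_def, Polynomial.sum_def, LinearMap.coe_sum, Finset.sum_apply]
  refine Finset.sum_congr rfl fun i hi => ?_
  rw [Module.End.mul_apply, frobL_pow_apply, Module.algebraMap_end_apply, Algebra.smul_def]

lemma fqAct_add (g h : F[X]) (β : E) :
    fqAct F (g + h) β = fqAct F g β + fqAct F h β := by
  simp [fqAct_eq_aeval, map_add]

lemma fqAct_sub (g h : F[X]) (β : E) :
    fqAct F (g - h) β = fqAct F g β - fqAct F h β := by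
  simp [fqAct_eq_aeval, map_sub]

lemma fqAct_mul (g h : F[X]) (β : E) :
    fqAct F (g * h) β = fqAct F g (fqAct F h β) := by
  simp [fqAct_eq_aeval, map_mul]

lemma fqAct_one (β : E) : fqAct F 1 β = β := by
  simp [fqAct_eq_aeval]

lemma fqAct_X_pow (k : ℕ) (β : E) : fqAct F (X ^ k) β = β ^ (Fintype.card F) ^ k := by
  rw [fqAct_eq_aeval, map_pow, aeval_X, frobL_pow_apply]

lemma fqAct_monomial (k : ℕ) (c : F) (β : E) :
    fqAct F (monomial k c) β = algebraMap F E c * β ^ (Fintype.card F) ^ k := by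
  rw [← C_mul_X_pow_eq_monomial, fqAct_eq_aeval, map_mul, map_pow, aeval_X, aeval_C]
  rw [Module.End.mul_apply, frobL_pow_apply, Module.algebraMap_end_apply, Algebra.smul_def]

lemma fqAct_finset_sum {ι : Type*} (s : Finset ι) (f : ι → F[X]) (β : E) :
    fqAct F (∑ i ∈ s, f i) β = ∑ i ∈ s, fqAct F (f i) β := by
  simp only [fqAct_eq_aeval, map_sum]
  rw [LinearMap.coe_sum, Finset.sum_apply]

lemma fqAct_frob (g : F[X]) (β : E) (k : ℕ) :
    (fqAct F g β) ^ (Fintype.card F) ^ k = fqAct F g (β ^ (Fintype.card F) ^ k) := by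
  have hc : Polynomial.aeval (frobL F E) g * (frobL F E) ^ k
      = (frobL F E) ^ k * Polynomial.aeval (frobL F E) g := by
    have hX : (frobL F E) ^ k = Polynomial.aeval (frobL F E) ((X : F[X]) ^ k) := by
      rw [map_pow, aeval_X]
    rw [hX, ← map_mul, ← map_mul, mul_comm]
  have := congrArg (fun (f : Module.End F E) => f β) hc
  simp only [Module.End.mul_apply] at this
  rw [fqAct_eq_aeval, fqAct_eq_aeval, ← frobL_pow_apply k β,
    ← frobL_pow_apply k ((Polynomial.aeval (frobL F E) g) β)]
  exact this.symm

lemma fqAct_eq_sum_range {g : F[X]} {N : ℕ} (h : g.natDegree < N) (β : E) :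
    fqAct F g β = ∑ i ∈ Finset.range N, algebraMap F E (g.coeff i) * β ^ (Fintype.card F) ^ i := by
  exact Polynomial.sum_over_range' g (by simp) N h

end FqActLemmas

/-! ### Auxiliary lemmas about traces over `ZMod p` -/

section TraceLemmas

variable {p : ℕ} [Fact p.Prime] {E : Type*} [Field E] [Algebra (ZMod p) E] [Finite E]

lemma trace_frob (x : E) :
    Algebra.trace (ZMod p) E (x ^ p) = Algebra.trace (ZMod p) E x := by
  haveI : CharP E p := charP_of_injective_algebraMap (algebraMap (ZMod p) E).injective p
  let frL : E →ₗ[ZMod p] E :=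
    { toFun := fun y => y ^ p
      map_add' := fun a b => add_pow_char a b p
      map_smul' := fun c y => by
        simp only [RingHom.id_apply, Algebra.smul_def, mul_pow]
        rw [← map_pow, ZMod.pow_card] }
  have hinj : Function.Injective frL := frobenius_inj E p
  have hbij : Function.Bijective frL := Finite.injective_iff_bijective.mp hinj
  let fr : E ≃ₗ[ZMod p] E := LinearEquiv.ofBijective frL hbij
  have hconj : Algebra.lmul (ZMod p) E (x ^ p) = fr.conj (Algebra.lmul (ZMod p) E x) := by
    apply LinearMap.ext
    intro z
    rw [LinearEquiv.conj_apply_apply]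
    have hz : (fr.symm z) ^ p = z := fr.apply_symm_apply z
    show x ^ p * z = fr ((Algebra.lmul (ZMod p) E x) (fr.symm z))
    show x ^ p * z = (x * fr.symm z) ^ p
    rw [mul_pow, hz]
  rw [Algebra.trace_apply, Algebra.trace_apply, hconj, LinearMap.trace_conj']

lemma trace_pow_p_pow (x : E) (k : ℕ) :
    Algebra.trace (ZMod p) E (x ^ p ^ k) = Algebra.trace (ZMod p) E x := by
  induction k with
  | zero => simp
  | succ k ih => rw [pow_succ, pow_mul, trace_frob, ih]

lemma trace_ker {θ : E} (h : ∀ β : E, Algebra.trace (ZMod p) E (θ * β) = 0) : θ = 0 := by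
  haveI : FiniteDimensional (ZMod p) E := Module.Finite.of_finite
  exact (traceForm_nondegenerate (ZMod p) E).1 θ fun β => by
    simpa [Algebra.traceForm_apply] using h β

omit [Finite E] in
lemma stdChar_eq_one_iff' (a γ : E) :
    Complex.exp (2 * Real.pi * Complex.I *
      ((Algebra.trace (ZMod p) E (a * γ)).val : ℂ) / p) = 1 ↔
    Algebra.trace (ZMod p) E (a * γ) = 0 := by
  have hp : 0 < p := (Fact.out : p.Prime).pos
  set v := (Algebra.trace (ZMod p) E (a * γ)).val with hv
  constructor
  · intro h
    rw [Complex.exp_eq_one_iff] at h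
    obtain ⟨k, hk⟩ := h
    have h2 : (2 * (Real.pi : ℂ) * Complex.I) ≠ 0 := by
      simp [Real.pi_ne_zero, Complex.I_ne_zero]
    have hp0 : (p : ℂ) ≠ 0 := Nat.cast_ne_zero.mpr hp.ne'
    have hval : (v : ℂ) = (k : ℂ) * p := by
      field_simp at hk
      apply mul_left_cancel₀ h2
      linear_combination (2 * (Real.pi : ℂ) * Complex.I) * hk
    have hint : (v : ℤ) = k * p := by exact_mod_cast hval
    have hdvd : (p : ℤ) ∣ (v : ℤ) := ⟨k, by rw [hint, mul_comm]⟩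
    have hdvd' : p ∣ v := Int.ofNat_dvd.mp hdvd
    have hlt : v < p := ZMod.val_lt _
    have hv0 : v = 0 := Nat.eq_zero_of_dvd_of_lt hdvd' hlt
    rw [← ZMod.val_eq_zero]
    exact hv0
  · intro h
    rw [hv, h, ZMod.val_zero]
    simp

end TraceLemmas

/-! ### Reversal lemmas -/

section ReverseLemmas

variable {K : Type*} [Field K]

lemma rev_rev_coeff (r : K[X]) (j : ℕ) :
    r.reverse.reverse.coeff j = r.coeff (j + r.natTrailingDegree) := by
  by_cases hr : r = 0
  · simp [hr]
  have ht : r.natTrailingDegree ≤ r.natDegree := r.natTrailingDegree_le_natDegree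
  by_cases hj : j ≤ r.natDegree - r.natTrailingDegree
  · rw [coeff_reverse, reverse_natDegree, revAt_le hj, coeff_reverse,
      revAt_le (by omega)]
    congr 1
    omega
  · push_neg at hj
    have h1 : r.reverse.reverse.natDegree < j := by
      have h2 : r.reverse.reverse.natDegree = r.natDegree - r.natTrailingDegree := by
        rw [reverse_natDegree, reverse_natDegree, natTrailingDegree_reverse, Nat.sub_zero]
      omega
    rw [coeff_eq_zero_of_natDegree_lt h1, coeff_eq_zero_of_natDegree_lt (by omega)]

lemma exists_rev_rev (r : K[X]) : ∃ t, r = r.reverse.reverse * X ^ t := by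
  refine ⟨r.natTrailingDegree, ?_⟩
  ext k
  rw [coeff_mul_X_pow']
  by_cases hk : r.natTrailingDegree ≤ k
  · rw [if_pos hk, rev_rev_coeff]
    congr 1
    omega
  · rw [if_neg hk]
    exact coeff_eq_zero_of_lt_natTrailingDegree (by omega)

lemma reverse_dvd_of_dvd_reverse {m r : K[X]} (h : m ∣ r.reverse) : m.reverse ∣ r := by
  obtain ⟨s, hs⟩ := h
  obtain ⟨t, ht⟩ := exists_rev_rev r
  have hrr : r.reverse.reverse = m.reverse * s.reverse := by
    rw [hs, reverse_mul_of_domain]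
  exact ⟨s.reverse * X ^ t, by rw [ht, hrr, mul_assoc]⟩

end ReverseLemmas

/-- The "reflection mod `Xⁿ - 1`" of a polynomial, adjoint to it w.r.t. the trace form. -/
def conjP (F : Type*) [Field F] (n : ℕ) (g : F[X]) : F[X] :=
  ∑ i ∈ g.support, monomial ((n - i % n) % n) (g.coeff i)

theorem fqOrder_eq_charFqOrder_iff_selfReciprocal
    (p : ℕ) [Fact p.Prime] (F : Type*) [Field F] [Fintype F] [CharP F p]
    (E : Type*) [Field E] [Algebra F E] [Algebra (ZMod p) E]
    (n : ℕ) (hn : 1 ≤ n) (hrank : Module.finrank F E = n)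
    (α : E) (m : F[X]) (hm : IsFqOrder F α m) :
    IsCharFqOrder F (stdChar p α) m ↔ monicRecip m = m := by
  classical
  obtain ⟨hmonic, hann, hmin⟩ := hm
  haveI : FiniteDimensional F E := FiniteDimensional.of_finrank_pos (by rw [hrank]; omega)
  haveI : Finite E := Module.finite_of_finite F
  haveI : Fintype E := Fintype.ofFinite E
  have hcard : Fintype.card E = (Fintype.card F) ^ n := by
    rw [Module.card_eq_pow_finrank (K := F) (V := E), hrank]
  have hpowqn : ∀ x : E, x ^ (Fintype.card F) ^ n = x := fun x => by
    rw [← hcard]; exact FiniteField.pow_card x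
  have hpow_mult : ∀ (x : E) (t : ℕ), x ^ (Fintype.card F) ^ (n * t) = x := by
    intro x t
    induction t with
    | zero => simp
    | succ t ih => rw [Nat.mul_succ, pow_add, pow_mul, ih, hpowqn]
  have htrq : ∀ (x : E) (k : ℕ),
      Algebra.trace (ZMod p) E (x ^ (Fintype.card F) ^ k) = Algebra.trace (ZMod p) E x := by
    obtain ⟨e, hpp, he⟩ := FiniteField.card F p
    intro x k
    rw [he, ← pow_mul]
    exact trace_pow_p_pow x ((e : ℕ) * k)
  have hexp : ∀ i : ℕ, ∃ t, i + (n - i % n) % n = n * t := by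
    intro i
    rcases Nat.eq_zero_or_pos (i % n) with h0 | hpos
    · refine ⟨i / n, ?_⟩
      rw [h0, Nat.sub_zero, Nat.mod_self, Nat.add_zero]
      conv_lhs => rw [← Nat.div_add_mod i n, h0, Nat.add_zero]
    · refine ⟨i / n + 1, ?_⟩
      have h1 : i % n < n := Nat.mod_lt _ (by omega)
      have h2 : (n - i % n) % n = n - i % n := Nat.mod_eq_of_lt (by omega)
      have h3 := Nat.div_add_mod i n
      have h4 : n * (i / n + 1) = n * (i / n) + n := by ring
      rw [h2]; omega
  have hterm : ∀ (c : F) (i : ℕ) (β : E),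
      Algebra.trace (ZMod p) E (α * (algebraMap F E c * β ^ (Fintype.card F) ^ i)) =
      Algebra.trace (ZMod p) E
        (algebraMap F E c * α ^ (Fintype.card F) ^ ((n - i % n) % n) * β) := by
    intro c i β
    obtain ⟨t, ht⟩ := hexp i
    rw [← htrq (α * (algebraMap F E c * β ^ (Fintype.card F) ^ i)) ((n - i % n) % n)]
    congr 1
    calc (α * (algebraMap F E c * β ^ (Fintype.card F) ^ i)) ^ (Fintype.card F) ^ ((n - i % n) % n)
        = α ^ (Fintype.card F) ^ ((n - i % n) % n) *
          (algebraMap F E c * β ^ (Fintype.card F) ^ (i + (n - i % n) % n)) := by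
          rw [mul_pow, mul_pow, algebraMap_pow_card_pow, ← pow_mul, ← pow_add]
      _ = algebraMap F E c * α ^ (Fintype.card F) ^ ((n - i % n) % n) * β := by
          rw [ht, hpow_mult]; ring
  have hθ : ∀ g : F[X], fqAct F (conjP F n g) α
      = ∑ i ∈ g.support, algebraMap F E (g.coeff i) *
          α ^ (Fintype.card F) ^ ((n - i % n) % n) := by
    intro g
    show fqAct F (∑ i ∈ g.support, monomial ((n - i % n) % n) (g.coeff i)) α = _
    rw [fqAct_finset_sum]
    exact Finset.sum_congr rfl fun i _ => fqAct_monomial _ _ _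
  have hadj : ∀ (g : F[X]) (β : E),
      Algebra.trace (ZMod p) E (α * fqAct F g β)
        = Algebra.trace (ZMod p) E (fqAct F (conjP F n g) α * β) := by
    intro g β
    rw [hθ, Finset.sum_mul, map_sum]
    show Algebra.trace (ZMod p) E
      (α * Polynomial.sum g fun i a => algebraMap F E a * β ^ (Fintype.card F) ^ i) = _
    rw [Polynomial.sum_def, Finset.mul_sum, map_sum]
    exact Finset.sum_congr rfl fun i _ => hterm (g.coeff i) i β
  have hbridge : ∀ g : F[X],
      (∀ β, Algebra.trace (ZMod p) E (α * fqAct F g β) = 0) ↔ fqAct F (conjP F n g) α = 0 := by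
    intro g
    constructor
    · intro h
      exact trace_ker fun β => by rw [← hadj g β]; exact h β
    · intro h β
      rw [hadj, h, zero_mul, map_zero]
  have hfqXn : ∀ β : E, fqAct F (X ^ n - 1 : F[X]) β = 0 := by
    intro β
    rw [fqAct_sub, fqAct_X_pow, fqAct_one, hpowqn, sub_self]
  have hvmonic : (X ^ n - 1 : F[X]).Monic := by
    have := monic_X_pow_sub_C (1 : F) (by omega : n ≠ 0)
    rwa [map_one] at this
  have hvne : (X ^ n - 1 : F[X]) ≠ 0 := hvmonic.ne_zero
  have hmdvdv : m ∣ (X ^ n - 1 : F[X]) := hmin _ (hfqXn α)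
  have hm0 : m.coeff 0 ≠ 0 := by
    intro h0
    have hXm : (X : F[X]) ∣ m := X_dvd_iff.mpr h0
    have hXv : (X : F[X]) ∣ X ^ n - 1 := hXm.trans hmdvdv
    have h1 : (X ^ n - 1 : F[X]).coeff 0 = 0 := X_dvd_iff.mp hXv
    have h2 : (X ^ n - 1 : F[X]).coeff 0 = -1 := by
      rw [coeff_sub, coeff_X_pow, coeff_one]
      have : ¬ (0 = n) := by omega
      simp [this]
    rw [h2] at h1
    exact one_ne_zero (neg_eq_zero.mp h1)
  have hdn : m.natDegree ≤ n := by
    have h1 := natDegree_le_of_dvd hmdvdv hvne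
    have h2 : (X ^ n - 1 : F[X]) = X ^ n - C 1 := by rw [map_one]
    rwa [h2, natDegree_X_pow_sub_C] at h1
  have hnt0 : m.natTrailingDegree = 0 := natTrailingDegree_eq_zero.mpr (Or.inr hm0)
  have hms_monic : (monicRecip m).Monic := by
    show (monicRecip m).leadingCoeff = 1
    rw [monicRecip, leadingCoeff_mul, leadingCoeff_C, reverse_leadingCoeff, trailingCoeff, hnt0]
    exact inv_mul_cancel₀ hm0
  have hms_deg : (monicRecip m).natDegree ≤ m.natDegree := by
    calc (monicRecip m).natDegree ≤ m.reverse.natDegree := natDegree_C_mul_le _ _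
    _ = m.natDegree := by rw [reverse_natDegree, hnt0, Nat.sub_zero]
  have hee : ∀ i : ℕ, i ≤ n →
      α ^ (Fintype.card F) ^ ((n - i % n) % n) = α ^ (Fintype.card F) ^ (n - i) := by
    intro i hi
    rcases Nat.lt_or_ge i n with hlt | hge
    · rcases Nat.eq_zero_or_pos i with rfl | hpos
      · simp only [Nat.zero_mod, Nat.sub_zero, Nat.mod_self, pow_zero, pow_one]
        exact (hpowqn α).symm
      · rw [Nat.mod_eq_of_lt hlt, Nat.mod_eq_of_lt (by omega)]
    · have hin : i = n := le_antisymm hi hge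
      subst hin
      rw [Nat.mod_self, Nat.sub_zero, Nat.mod_self, Nat.sub_self]
  -- (a) `conjP (monicRecip m)` annihilates `α`
  have hθms : fqAct F (conjP F n (monicRecip m)) α = 0 := by
    rw [hθ]
    have hsub : (monicRecip m).support ⊆ Finset.range (m.natDegree + 1) := fun i hi =>
      Finset.mem_range.mpr (Nat.lt_succ_of_le ((le_natDegree_of_mem_supp i hi).trans hms_deg))
    rw [Finset.sum_subset hsub (fun i _ hi => by
      rw [notMem_support_iff.mp hi, map_zero, zero_mul])]
    have hco : ∀ i ∈ Finset.range (m.natDegree + 1),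
        algebraMap F E ((monicRecip m).coeff i) * α ^ (Fintype.card F) ^ ((n - i % n) % n)
        = algebraMap F E (m.coeff 0)⁻¹ *
            (algebraMap F E (m.coeff (m.natDegree - i)) * α ^ (Fintype.card F) ^ (n - i)) := by
      intro i hi
      have hi' : i ≤ m.natDegree := Nat.lt_succ_iff.mp (Finset.mem_range.mp hi)
      rw [hee i (hi'.trans hdn), monicRecip, coeff_C_mul, coeff_reverse, revAt_le hi', map_mul]
      ring
    rw [Finset.sum_congr rfl hco, ← Finset.mul_sum]
    have hstep : ∑ i ∈ Finset.range (m.natDegree + 1),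
        algebraMap F E (m.coeff (m.natDegree - i)) * α ^ (Fintype.card F) ^ (n - i)
        = ∑ j ∈ Finset.range (m.natDegree + 1),
            algebraMap F E (m.coeff j) * α ^ (Fintype.card F) ^ ((n - m.natDegree) + j) := by
      rw [← Finset.sum_range_reflect
        (fun j => algebraMap F E (m.coeff j) * α ^ (Fintype.card F) ^ ((n - m.natDegree) + j))
        (m.natDegree + 1)]
      apply Finset.sum_congr rfl
      intro i hi
      have hi' : i ≤ m.natDegree := Nat.lt_succ_iff.mp (Finset.mem_range.mp hi)
      have e1 : m.natDegree + 1 - 1 - i = m.natDegree - i := by omega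
      have e2 : (n - m.natDegree) + (m.natDegree + 1 - 1 - i) = n - i := by omega
      rw [e2, e1]
    rw [hstep]
    have hfin : ∑ j ∈ Finset.range (m.natDegree + 1),
        algebraMap F E (m.coeff j) * α ^ (Fintype.card F) ^ ((n - m.natDegree) + j)
        = fqAct F m (α ^ (Fintype.card F) ^ (n - m.natDegree)) := by
      rw [fqAct_eq_sum_range (Nat.lt_succ_self _)]
      apply Finset.sum_congr rfl
      intro j hj
      rw [pow_add, pow_mul]
    rw [hfin, ← fqAct_frob, hann, zero_pow (pow_ne_zero _ Fintype.card_ne_zero), mul_zero]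
  have hPms : ∀ β, Algebra.trace (ZMod p) E (α * fqAct F (monicRecip m) β) = 0 :=
    (hbridge _).mpr hθms
  -- `monicRecip m` divides `Xⁿ - 1`
  have hmsv : monicRecip m ∣ (X ^ n - 1 : F[X]) := by
    obtain ⟨t0, ht0⟩ := hmdvdv
    have hrev : (X ^ n - 1 : F[X]).reverse = 1 - X ^ n := by
      have hdeg : (X ^ n - 1 : F[X]).natDegree = n := by
        have h2 : (X ^ n - 1 : F[X]) = X ^ n - C 1 := by rw [map_one]
        rw [h2, natDegree_X_pow_sub_C]
      show reflect (X ^ n - 1 : F[X]).natDegree (X ^ n - 1 : F[X]) = 1 - X ^ n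
      rw [hdeg, reflect_sub, reflect_monomial, reflect_one, revAt_le (le_refl n), Nat.sub_self,
        pow_zero]
    have hfac : (1 - X ^ n : F[X]) = m.reverse * t0.reverse := by
      rw [← hrev, ht0, reverse_mul_of_domain]
    refine ⟨C (m.coeff 0) * (-(t0.reverse)), ?_⟩
    rw [monicRecip]
    rw [show C (m.coeff 0)⁻¹ * m.reverse * (C (m.coeff 0) * -t0.reverse)
        = (C (m.coeff 0)⁻¹ * C (m.coeff 0)) * -(m.reverse * t0.reverse) by ring]
    rw [← C_mul, inv_mul_cancel₀ hm0, C_1, one_mul, ← hfac, neg_sub]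
  -- (b) anything annihilated by the character is divisible by `monicRecip m`
  have hPdvd : ∀ g : F[X],
      (∀ β, Algebra.trace (ZMod p) E (α * fqAct F g β) = 0) → monicRecip m ∣ g := by
    intro g hg
    have hdecomp := modByMonic_add_div g (X ^ n - 1 : F[X])
    obtain ⟨r, hrdef⟩ : ∃ r : F[X], r = g %ₘ (X ^ n - 1 : F[X]) := ⟨_, rfl⟩
    rw [← hrdef] at hdecomp
    have hrg : ∀ β : E, fqAct F r β = fqAct F g β := by
      intro β
      conv_rhs => rw [← hdecomp]
      rw [fqAct_add, fqAct_mul, hfqXn, add_zero]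
    have hPr : ∀ β, Algebra.trace (ZMod p) E (α * fqAct F r β) = 0 := fun β => by
      rw [hrg]; exact hg β
    have hθr : fqAct F (conjP F n r) α = 0 := (hbridge r).mp hPr
    have hmr : m ∣ conjP F n r := hmin _ hθr
    by_cases hrz : r = 0
    · rw [← hdecomp, hrz]
      exact dvd_add (dvd_zero _) (hmsv.mul_right _)
    · have hdr : r.natDegree < n := by
        have h1 : r.degree < (X ^ n - 1 : F[X]).degree := by
          rw [hrdef]; exact degree_modByMonic_lt g hvmonic
        have h2 : (X ^ n - 1 : F[X]).degree = n := by
          have h3 : (X ^ n - 1 : F[X]) = X ^ n - C 1 := by rw [map_one]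
          rw [h3, degree_X_pow_sub_C (by omega)]
        rw [h2] at h1
        exact (natDegree_lt_iff_degree_lt hrz).mpr h1
      have hsupp_le : ∀ i ∈ r.support, i ≤ r.natDegree := fun i hi =>
        le_natDegree_of_mem_supp i hi
      have hkey2 : X ^ (n - r.natDegree) * r.reverse
          = ∑ i ∈ r.support, monomial (n - i) (r.coeff i) := by
        have hArefl : ∀ N : ℕ, (∀ i ∈ r.support, i ≤ N) →
            reflect N r = ∑ i ∈ r.support, monomial (N - i) (r.coeff i) := by
          intro N hN
          let A : F[X] →+ F[X] :=
            AddMonoidHom.mk' (reflect N) (fun f g => reflect_add f g N)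
          conv_lhs => rw [r.as_sum_support]
          rw [show reflect N (∑ i ∈ r.support, monomial i (r.coeff i))
              = ∑ i ∈ r.support, reflect N (monomial i (r.coeff i)) from
            map_sum A _ _]
          apply Finset.sum_congr rfl
          intro i hi
          rw [← C_mul_X_pow_eq_monomial, reflect_C_mul_X_pow, revAt_le (hN i hi),
            C_mul_X_pow_eq_monomial]
        have hA : r.reverse = ∑ i ∈ r.support, monomial (r.natDegree - i) (r.coeff i) := by
          show reflect r.natDegree r = _
          exact hArefl _ hsupp_le
        rw [hA, Finset.mul_sum]
        apply Finset.sum_congr rfl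
        intro i hi
        rw [← C_mul_X_pow_eq_monomial, ← C_mul_X_pow_eq_monomial (n := n - i)]
        rw [show X ^ (n - r.natDegree) * (C (r.coeff i) * X ^ (r.natDegree - i))
            = C (r.coeff i) * (X ^ (n - r.natDegree) * X ^ (r.natDegree - i)) by ring, ← pow_add]
        have he3 : (n - r.natDegree) + (r.natDegree - i) = n - i := by
          have := hsupp_le i hi; omega
        rw [he3]
      have hdiff : conjP F n r - ∑ i ∈ r.support, monomial (n - i) (r.coeff i)
          = - (C (r.coeff 0) * (X ^ n - 1)) := by
        show (∑ i ∈ r.support, monomial ((n - i % n) % n) (r.coeff i)) - _ = _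
        rw [← Finset.sum_sub_distrib]
        rw [Finset.sum_eq_single 0 (fun i hi hne => by
            have hi1 : 1 ≤ i := Nat.one_le_iff_ne_zero.mpr hne
            have hi2 : i < n := lt_of_le_of_lt (hsupp_le i hi) hdr
            rw [Nat.mod_eq_of_lt hi2, Nat.mod_eq_of_lt (by omega), sub_self])
          (fun h0 => by
            rw [notMem_support_iff.mp h0]
            simp)]
        rw [Nat.zero_mod, Nat.sub_zero, Nat.mod_self, monomial_zero_left,
          ← C_mul_X_pow_eq_monomial]
        ring
      have hsplit : conjP F n r = X ^ (n - r.natDegree) * r.reverse - C (r.coeff 0) * (X ^ n - 1) := by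
        rw [hkey2]
        linear_combination hdiff
      have hmdvd2 : m ∣ X ^ (n - r.natDegree) * r.reverse := by
        have heq4 : X ^ (n - r.natDegree) * r.reverse
            = conjP F n r + C (r.coeff 0) * (X ^ n - 1) := by
          linear_combination -hsplit
        rw [heq4]
        exact dvd_add hmr (hmdvdv.mul_left _)
      have hXcop : IsCoprime (m : F[X]) (X ^ (n - r.natDegree)) := by
        have hXm : ¬ (X : F[X]) ∣ m := fun h => hm0 (X_dvd_iff.mp h)
        exact ((Polynomial.prime_X.coprime_iff_not_dvd.mpr hXm).pow_left).symm
      have hmrev : m ∣ r.reverse := hXcop.dvd_of_dvd_mul_left hmdvd2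
      obtain ⟨w, hw⟩ := reverse_dvd_of_dvd_reverse hmrev
      have hms_r : monicRecip m ∣ r := ⟨C (m.coeff 0) * w, by
        rw [monicRecip, hw]
        rw [show C (m.coeff 0)⁻¹ * m.reverse * (C (m.coeff 0) * w)
            = (C (m.coeff 0)⁻¹ * C (m.coeff 0)) * (m.reverse * w) by ring]
        rw [← C_mul, inv_mul_cancel₀ hm0, C_1, one_mul]⟩
      rw [← hdecomp]
      exact dvd_add hms_r (hmsv.mul_right _)
  -- assemble
  constructor
  · rintro ⟨-, hc1, hc2⟩
    have h1 : monicRecip m ∣ m :=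
      hPdvd m (fun β => (stdChar_eq_one_iff' α (fqAct F m β)).mp (hc1 β))
    have h2 : m ∣ monicRecip m :=
      hc2 _ (fun β => (stdChar_eq_one_iff' α (fqAct F (monicRecip m) β)).mpr (hPms β))
    exact eq_of_monic_of_associated hms_monic hmonic (associated_of_dvd_dvd h1 h2)
  · intro heq
    refine ⟨hmonic, fun β => ?_, fun g hg => ?_⟩
    · exact (stdChar_eq_one_iff' α _).mpr (by have := hPms β; rwa [heq] at this)
    · have hPg : ∀ β, Algebra.trace (ZMod p) E (α * fqAct F g β) = 0 := fun β =>
        (stdChar_eq_one_iff' α _).mp (hg β)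
      have hdv := hPdvd g hPg
      rwa [heq] at hdv
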